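/- For any Boolean function f : {0,1}^n → {0,1} and coordinate i ∈ [n], the Shapley value of coordinate i equals the integral over p ∈ [0,1] of the p-biased influence: Inf_{Shapley}[f,i] = ∫₀¹ Inf^{(p)}[f,i] dp. -/

import Mathlib

open Finset

/-- Flip the i-th bit of x. -/
def flipBit {n : ℕ} (i : Fin n) (x : Fin n → Bool) : Fin n → Bool :=
  Function.update x i (!x i)

/-- The product p-biased distribution weight of x ∈ {0,1}^n. -/
def muW {n : ℕ} (p : ℝ) (x : Fin n → Bool) : ℝ :=
  ∏ i, if x i then p else 1 - p

/-- The p-biased Fourier character associated to S ⊆ [n]. -/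
noncomputable def chiW {n : ℕ} (p : ℝ) (S : Finset (Fin n)) (x : Fin n → Bool) : ℝ :=
  ∏ i ∈ S, ((if x i then (1 : ℝ) else 0) - p) / Real.sqrt (p * (1 - p))

/-- The p-biased Fourier coefficient of f at S. -/
noncomputable def fhat {n : ℕ} (p : ℝ) (f : (Fin n → Bool) → ℝ) (S : Finset (Fin n)) : ℝ :=
  ∑ x : Fin n → Bool, muW p x * (f x * chiW p S x)

/-- The influence of coordinate i in f under the p-biased distribution. -/
def infl {n : ℕ} (p : ℝ) (f : (Fin n → Bool) → ℝ) (i : Fin n) : ℝ :=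
  ∑ x : Fin n → Bool, muW p x * (f x - f (flipBit i x)) ^ 2
/-- Hamming weight of x ∈ {0,1}^n. -/
def ham {n : ℕ} (x : Fin n → Bool) : ℕ :=
  (Finset.univ.filter (fun i => x i = true)).card

/-- The Shapley distribution weight of x ∈ {0,1}^n. -/
noncomputable def shapW {n : ℕ} (x : Fin n → Bool) : ℝ :=
  (((n : ℝ) + 1) * (Nat.choose n (ham x) : ℝ))⁻¹
/-- Embedding of Bool into ℝ. -/
def bR (b : Bool) : ℝ := if b then 1 else 0

/-- The influence of coordinate i under the Shapley distribution. -/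
noncomputable def shapInfl {n : ℕ} (f : (Fin n → Bool) → Bool) (i : Fin n) : ℝ :=
  ∑ x : Fin n → Bool, shapW x * (bR (f x) - bR (f (flipBit i x))) ^ 2

/-! The Shapley weight of `x` is the Beta integral
`∫₀¹ p ^ |x| (1 - p) ^ (n - |x|) dp = 1 / ((n + 1) C(n, |x|))`, i.e. the Shapley distribution is the
uniform mixture of the `p`-biased distributions over `p ∈ [0, 1]`. Influence is an expectation,
hence linear in the distribution, so it commutes with this mixture. -/

theorem integral_pow_mul_one_sub_pow (k m : ℕ) :
    ∫ x in (0 : ℝ)..1, x ^ k * (1 - x) ^ m = (((k + m + 1 : ℕ) : ℝ) * (k + m).choose k)⁻¹ := by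
  have h := Complex.betaIntegral_eq_Gamma_mul_div (k + 1) (m + 1)
    (by norm_cast; omega) (by norm_cast; omega)
  simp only [Complex.betaIntegral, add_sub_cancel_right] at h
  norm_cast at h
  rw [intervalIntegral.integral_ofReal, show k + 1 + (m + 1) = k + m + 1 + 1 by ring,
    Nat.cast_succ k, Nat.cast_succ m, Nat.cast_succ (k + m + 1)] at h
  simp only [Complex.Gamma_nat_eq_factorial] at h
  apply Complex.ofReal_injective
  rw [h, Nat.cast_add_choose, Nat.factorial_succ]
  push_cast
  field_simp

theorem muW_eq_pow_mul_pow {n : ℕ} (p : ℝ) (x : Fin n → Bool) :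
    muW p x = p ^ ham x * (1 - p) ^ (n - ham x) := by
  rw [muW, prod_ite, prod_const, prod_const, ham, filter_not, card_sdiff]
  simp

theorem continuous_muW {n : ℕ} (x : Fin n → Bool) : Continuous fun p => muW p x := by
  simp_rw [muW_eq_pow_mul_pow]
  fun_prop

theorem ham_le {n : ℕ} (x : Fin n → Bool) : ham x ≤ n := by
  simpa [ham] using card_filter_le univ fun i => x i = true

theorem integral_muW {n : ℕ} (x : Fin n → Bool) : ∫ p in (0 : ℝ)..1, muW p x = shapW x := by
  simp_rw [muW_eq_pow_mul_pow]
  rw [integral_pow_mul_one_sub_pow, Nat.add_sub_cancel' (ham_le x), shapW]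
  push_cast
  rfl

theorem sum_shapW_mul_eq_integral_sum_muW_mul {n : ℕ} (g : (Fin n → Bool) → ℝ) :
    ∑ x, shapW x * g x = ∫ p in (0 : ℝ)..1, ∑ x, muW p x * g x := by
  rw [intervalIntegral.integral_finsetSum]
  · simp_rw [intervalIntegral.integral_mul_const, integral_muW]
  · exact fun x _ => ((continuous_muW x).mul continuous_const).intervalIntegrable _ _

/-- The Shapley value of a coordinate equals the integral over p ∈ [0,1] of its
p-biased influence. -/
theorem shapley_eq_integral_of_biased_influence {n : ℕ}
    (f : (Fin n → Bool) → Bool) (i : Fin n) :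
    shapInfl f i = ∫ p in (0 : ℝ)..1, infl p (fun x => bR (f x)) i :=
  sum_shapW_mul_eq_integral_sum_muW_mul _
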